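/- Let X be a random variable and Z = (Z₁, …, Z_L) a tuple of random variables, all taking values in finite types on a common probability space with a joint probability mass function. Suppose (i) Z₁, …, Z_L are mutually independent, and (ii) Z₁, …, Z_L are mutually conditionally independent given X. Then I(X;Z) = ∑_{i=1}^{L} I(X;Z_i). -/

import Mathlib

open Finset

/-- The distribution (pmf) of a random variable `f` on a finite sample space with pmf `p`. -/
noncomputable def dist {Ω A : Type*} [Fintype Ω] [DecidableEq A]
    (p : Ω → ℝ) (f : Ω → A) (a : A) : ℝ :=
  ∑ ω, if f ω = a then p ω else 0

/-- Shannon entropy of a random variable `f` (convention `0 · log 0 = 0`). -/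
noncomputable def entropy {Ω A : Type*} [Fintype Ω] [Fintype A] [DecidableEq A]
    (p : Ω → ℝ) (f : Ω → A) : ℝ :=
  -∑ a, dist p f a * Real.log (dist p f a)

/-- Mutual information `I(f;g) = H(f) + H(g) − H(f,g)`. -/
noncomputable def mutualInfo {Ω A B : Type*} [Fintype Ω] [Fintype A] [Fintype B]
    [DecidableEq A] [DecidableEq B] (p : Ω → ℝ) (f : Ω → A) (g : Ω → B) : ℝ :=
  entropy p f + entropy p g - entropy p (fun ω => (f ω, g ω))

/-- The conditional distribution of `f` given `h = c`. -/
noncomputable def condDist {Ω A C : Type*} [Fintype Ω] [DecidableEq A] [DecidableEq C]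
    (p : Ω → ℝ) (f : Ω → A) (h : Ω → C) (c : C) (a : A) : ℝ :=
  (∑ ω, if f ω = a ∧ h ω = c then p ω else 0) / dist p h c

/-- The entropy of `f` conditioned on the event `h = c`. -/
noncomputable def condEntropy {Ω A C : Type*} [Fintype Ω] [Fintype A] [Fintype C]
    [DecidableEq A] [DecidableEq C] (p : Ω → ℝ) (f : Ω → A) (h : Ω → C) (c : C) : ℝ :=
  -∑ a, condDist p f h c a * Real.log (condDist p f h c a)

/-- Conditional mutual information
`I(f;g | h) = ∑_c P(h=c) [H(f|h=c) + H(g|h=c) − H(f,g|h=c)]`. -/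
noncomputable def condMutualInfo {Ω A B C : Type*} [Fintype Ω] [Fintype A] [Fintype B]
    [Fintype C] [DecidableEq A] [DecidableEq B] [DecidableEq C]
    (p : Ω → ℝ) (f : Ω → A) (g : Ω → B) (h : Ω → C) : ℝ :=
  ∑ c, dist p h c *
    (condEntropy p f h c + condEntropy p g h c
      - condEntropy p (fun ω => (f ω, g ω)) h c)
/-!
By the chain rule `I(X;Z) = H(Z) − ∑ₓ P(X=x) H(Z | X=x)`. Under independence the pmf of `Z` is
the product of the pmfs of the `Zᵢ`, and under conditional independence the same holds given
`X = x`. The entropy of a product pmf is the sum of the entropies of its factors: expanding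
`negMulLog (∏ᵢ qᵢ)` gives `∑ᵢ (∏ⱼ qⱼ) (−log qᵢ)`, and in the `i`-th term the factors `j ≠ i`
sum out to `1`. Both terms of `I(X;Z)` therefore split over `i`.
-/

open Real

theorem negMulLog_prod {ι : Type*} (s : Finset ι) (x : ι → ℝ) :
    negMulLog (∏ i ∈ s, x i) = -(∏ i ∈ s, x i) * ∑ i ∈ s, log (x i) := by
  by_cases h0 : ∏ i ∈ s, x i = 0
  · simp [h0]
  · rw [negMulLog, log_prod fun i hi => prod_ne_zero_iff.mp h0 i hi]

section ProductSums

variable {ι : Type*} [Fintype ι] [DecidableEq ι] {B : ι → Type*} [∀ i, Fintype (B i)]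

theorem sum_pi_prod_mul_apply (q : ∀ i, B i → ℝ) (hq : ∀ i, ∑ x, q i x = 1) (i : ι)
    (g : B i → ℝ) : ∑ b : ∀ j, B j, (∏ j, q j (b j)) * g (b i) = ∑ x, q i x * g x := by
  -- replace the `i`-th factor by `q i * g` and expand the product of sums
  set r := Function.update q i (fun x => q i x * g x)
  have hterm : ∀ b : ∀ j, B j, (∏ j, q j (b j)) * g (b i) = ∏ j, r j (b j) := by
    intro b
    simp only [r, Function.apply_update (fun j (s : B j → ℝ) => s (b j)),
      prod_update_of_mem (mem_univ i), ← mul_prod_erase univ (fun j => q j (b j)) (mem_univ i),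
      sdiff_singleton_eq_erase]
    ring
  have hsum : ∀ j, ∑ x, r j x = Function.update (fun _ => (1 : ℝ)) i (∑ x, q i x * g x) j := by
    intro j
    simp only [r, Function.apply_update (fun j (s : B j → ℝ) => ∑ x, s x), hq]
  simp only [hterm, ← Fintype.prod_sum, hsum, prod_update_of_mem (mem_univ i), prod_const_one,
    mul_one]

theorem sum_negMulLog_prod (q : ∀ i, B i → ℝ) (hq : ∀ i, ∑ x, q i x = 1) :
    ∑ b : ∀ i, B i, negMulLog (∏ i, q i (b i)) = ∑ i, ∑ x, negMulLog (q i x) := by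
  simp only [negMulLog_prod, mul_sum]
  rw [sum_comm]
  refine sum_congr rfl fun i _ => ?_
  simp only [neg_mul, sum_neg_distrib, negMulLog]
  exact congrArg Neg.neg (sum_pi_prod_mul_apply q hq i fun x => log (q i x))

end ProductSums

section Information

variable {Ω A C : Type*} [Fintype Ω] [DecidableEq A] [DecidableEq C] (p : Ω → ℝ)

theorem dist_nonneg_of_nonneg (hp : ∀ ω, 0 ≤ p ω) (f : Ω → A) (a : A) : 0 ≤ dist p f a :=
  sum_nonneg fun ω _ => by split_ifs <;> simp [hp ω]

theorem sum_dist [Fintype A] (f : Ω → A) : ∑ a, dist p f a = ∑ ω, p ω := by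
  simp only [_root_.dist]
  rw [sum_comm]
  simp

theorem sum_dist_pair [Fintype A] (h : Ω → C) (f : Ω → A) (c : C) :
    ∑ a, dist p (fun ω => (h ω, f ω)) (c, a) = dist p h c := by
  simp only [_root_.dist]
  rw [sum_comm]
  refine sum_congr rfl fun ω _ => ?_
  by_cases hc : h ω = c <;> simp [hc]

theorem condDist_eq_div (f : Ω → A) (h : Ω → C) (c : C) (a : A) :
    condDist p f h c a = dist p (fun ω => (h ω, f ω)) (c, a) / dist p h c := by
  simp only [condDist, _root_.dist, Prod.mk.injEq, and_comm]

theorem sum_condDist [Fintype A] (f : Ω → A) (h : Ω → C) (c : C) (hc : dist p h c ≠ 0) :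
    ∑ a, condDist p f h c a = 1 := by
  simp only [condDist_eq_div, ← sum_div, sum_dist_pair, div_self hc]

theorem dist_pair_eq_mul_condDist [Fintype A] (hp : ∀ ω, 0 ≤ p ω) (h : Ω → C) (f : Ω → A)
    (c : C) (a : A) :
    dist p (fun ω => (h ω, f ω)) (c, a) = dist p h c * condDist p f h c a := by
  rcases eq_or_ne (dist p h c) 0 with hc | hc
  -- here `condDist` is a junk `_ / 0`; the joint mass vanishes since it is bounded by the marginal
  · have hle : dist p (fun ω => (h ω, f ω)) (c, a) ≤ dist p h c :=
      sum_dist_pair p h f c ▸ single_le_sum (fun a' _ => dist_nonneg_of_nonneg p hp _ (c, a'))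
        (mem_univ a)
    rw [hc, zero_mul]
    exact le_antisymm (hc ▸ hle) (dist_nonneg_of_nonneg p hp _ _)
  · rw [condDist_eq_div, mul_div_cancel₀ _ hc]

theorem entropy_eq_sum_negMulLog [Fintype A] (f : Ω → A) :
    entropy p f = ∑ a, negMulLog (dist p f a) := by
  simp [entropy, negMulLog]

theorem condEntropy_eq_sum_negMulLog [Fintype A] [Fintype C] (f : Ω → A) (h : Ω → C) (c : C) :
    condEntropy p f h c = ∑ a, negMulLog (condDist p f h c a) := by
  simp [condEntropy, negMulLog]

theorem entropy_pair_eq_entropy_add_condEntropy [Fintype A] [Fintype C] (hp : ∀ ω, 0 ≤ p ω)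
    (h : Ω → C) (f : Ω → A) :
    entropy p (fun ω => (h ω, f ω)) = entropy p h + ∑ c, dist p h c * condEntropy p f h c := by
  have hmarg : ∀ c,
      (∑ a, condDist p f h c a) * negMulLog (dist p h c) = negMulLog (dist p h c) := by
    intro c
    rcases eq_or_ne (dist p h c) 0 with hc | hc
    · simp [hc]
    · rw [sum_condDist p f h c hc, one_mul]
  simp only [entropy_eq_sum_negMulLog, condEntropy_eq_sum_negMulLog, Fintype.sum_prod_type,
    dist_pair_eq_mul_condDist p hp, negMulLog_mul, sum_add_distrib, ← sum_mul, ← mul_sum, hmarg]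

theorem mutualInfo_eq_entropy_sub_condEntropy [Fintype A] [Fintype C] (hp : ∀ ω, 0 ≤ p ω)
    (h : Ω → C) (f : Ω → A) :
    mutualInfo p h f = entropy p f - ∑ c, dist p h c * condEntropy p f h c := by
  rw [mutualInfo, entropy_pair_eq_entropy_add_condEntropy p hp]
  ring

variable {ι : Type*} [Fintype ι] [DecidableEq ι] {B : ι → Type*} [∀ i, Fintype (B i)]
  [∀ i, DecidableEq (B i)]

theorem entropy_pi_of_indep (hpsum : ∑ ω, p ω = 1) (Z : ∀ i, Ω → B i)
    (hindep : ∀ b : ∀ i, B i, dist p (fun ω i => Z i ω) b = ∏ i, dist p (Z i) (b i)) :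
    entropy p (fun ω i => Z i ω) = ∑ i, entropy p (Z i) := by
  simp only [entropy_eq_sum_negMulLog, hindep]
  exact sum_negMulLog_prod _ fun i => (sum_dist p (Z i)).trans hpsum

theorem condEntropy_pi_of_condIndep [Fintype C] (h : Ω → C) (Z : ∀ i, Ω → B i) (c : C)
    (hc : dist p h c ≠ 0)
    (hcondindep : ∀ b : ∀ i, B i,
      condDist p (fun ω i => Z i ω) h c b = ∏ i, condDist p (Z i) h c (b i)) :
    condEntropy p (fun ω i => Z i ω) h c = ∑ i, condEntropy p (Z i) h c := by
  simp only [condEntropy_eq_sum_negMulLog, hcondindep]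
  exact sum_negMulLog_prod _ fun i => sum_condDist p (Z i) h c hc

end Information

/-- If the latents `Z₁, …, Z_L` are mutually independent and also mutually
conditionally independent given `X`, then `I(X;Z) = ∑ᵢ I(X;Zᵢ)`. -/
theorem mutualInfo_joint_eq_sum_of_indep
    {Ω A : Type*} {L : ℕ} {B : Fin L → Type*}
    [Fintype Ω] [Fintype A] [DecidableEq A]
    [∀ i, Fintype (B i)] [∀ i, DecidableEq (B i)]
    (p : Ω → ℝ) (hp : ∀ ω, 0 ≤ p ω) (hpsum : ∑ ω, p ω = 1)
    (X : Ω → A) (Z : ∀ i, Ω → B i)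
    (hindep : ∀ b : ∀ i, B i,
      dist p (fun ω i => Z i ω) b = ∏ i, dist p (Z i) (b i))
    (hcondindep : ∀ a, 0 < dist p X a → ∀ b : ∀ i, B i,
      condDist p (fun ω i => Z i ω) X a b = ∏ i, condDist p (Z i) X a (b i)) :
    mutualInfo p X (fun ω i => Z i ω) = ∑ i, mutualInfo p X (Z i) := by
  have hcond : ∀ a, dist p X a * condEntropy p (fun ω i => Z i ω) X a
      = ∑ i, dist p X a * condEntropy p (Z i) X a := by
    intro a
    rcases (dist_nonneg_of_nonneg p hp X a).eq_or_lt with ha | ha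
    · simp [← ha]
    · rw [condEntropy_pi_of_condIndep p X Z a ha.ne' (hcondindep a ha), mul_sum]
  rw [mutualInfo_eq_entropy_sub_condEntropy p hp, entropy_pi_of_indep p hpsum Z hindep,
    sum_congr rfl fun a _ => hcond a, sum_comm]
  simp only [mutualInfo_eq_entropy_sub_condEntropy p hp, sum_sub_distrib]
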